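/- arXiv:1912.07788 — 2 statements merged into one kernel-verified Lean document; each statement's English description precedes it below -/
import Mathlib

section
/- Let α = (α_k)_{k≥0} be a sequence in the open unit disk 𝔻 and let θ ∈ ℝ. Then for every n ≥ 0: (a) φ_n^*(e^{iθ}) ≠ 0, B_n(e^{iθ}) = e^{iθ} φ_n(e^{iθ})/φ_n^*(e^{iθ}) and |B_n(e^{iθ})| = 1; (b) |φ_{n+1}(e^{iθ})|^{-2} = |φ_n(e^{iθ})|^{-2} · (1 − |α_n|²)/|1 − α_n B_n(e^{iθ})|²; (c) |φ_n(e^{iθ})|^{-2} = ∏_{k=0}^{n−1} P_𝔻(α_k B_k(e^{iθ}), 1). -/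
open Complex Finset

/-- `ρ_k = √(1 − |α_k|²)`. -/
noncomputable def rhoV (α : ℕ → ℂ) (k : ℕ) : ℝ :=
  Real.sqrt (1 - ‖α k‖ ^ 2)

/-- The coupled Szegő recursion for the *normalized* orthogonal polynomials:
`szego α n z = (φ_n(z), φ_n^*(z))` where `φ_0 = φ_0^* = 1`,
`φ_{n+1}(z) = ρ_n⁻¹ (z φ_n(z) − conj(α_n) φ_n^*(z))` and
`φ_{n+1}^*(z) = ρ_n⁻¹ (φ_n^*(z) − α_n z φ_n(z))`. -/
noncomputable def szego (α : ℕ → ℂ) : ℕ → ℂ → ℂ × ℂ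
  | 0, _ => (1, 1)
  | n + 1, z =>
    let p := szego α n z
    (((rhoV α n : ℂ))⁻¹ * (z * p.1 - (starRingEnd ℂ) (α n) * p.2),
      ((rhoV α n : ℂ))⁻¹ * (p.2 - α n * z * p.1))

/-- `φ_n(z; α)`, the `n`-th normalized Szegő polynomial. -/
noncomputable def phiN (α : ℕ → ℂ) (n : ℕ) (z : ℂ) : ℂ := (szego α n z).1

/-- `φ_n^*(z; α)`, the `n`-th reversed normalized Szegő polynomial. -/
noncomputable def phiNStar (α : ℕ → ℂ) (n : ℕ) (z : ℂ) : ℂ := (szego α n z).2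

/-- The Prüfer/Blaschke quantities: `B_0(z) = z`,
`B_{n+1}(z) = z B_n(z) (1 − conj(α_n B_n(z)))/(1 − α_n B_n(z))`. -/
noncomputable def BV (α : ℕ → ℂ) : ℕ → ℂ → ℂ
  | 0, z => z
  | n + 1, z =>
    z * BV α n z *
      ((1 - (starRingEnd ℂ) (α n * BV α n z)) / (1 - α n * BV α n z))

/-- The Poisson kernel of the unit disk at the boundary point `1`:
`P_𝔻(z,1) = (1 − |z|²)/|1 − z|²`. -/
noncomputable def poissonD (z : ℂ) : ℝ :=
  (1 - ‖z‖ ^ 2) / ‖1 - z‖ ^ 2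

/-!
On the unit circle `|B_n| = 1`, since `|1 - conj w| = |1 - w|`, and `z φ_n = B_n φ_n^*` by
induction: given it, the Szegő step multiplies `φ_n^*` by `ρ_n⁻¹ (1 - α_n B_n)`, and
`B_n conj(B_n) = 1` turns `z φ_{n+1}` into `B_{n+1} φ_{n+1}^*`. Since
`|φ_n| = |z φ_n| = |φ_n^*|`, each step multiplies `|φ_n|⁻²` by `ρ_n² / |1 - α_n B_n|²`, which
is the Poisson kernel at `α_n B_n` because `|α_n B_n| = |α_n|`.
-/

lemma norm_one_sub_conj (w : ℂ) : ‖1 - (starRingEnd ℂ) w‖ = ‖1 - w‖ := by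
  rw [← norm_conj (1 - w), map_sub, map_one]

lemma one_sub_mul_ne_zero_of_norm {a b : ℂ} (ha : ‖a‖ < 1) (hb : ‖b‖ = 1) : 1 - a * b ≠ 0 := by
  intro h
  have : ‖a * b‖ = 1 := by rw [← sub_eq_zero.mp h, norm_one]
  rw [norm_mul, hb, mul_one] at this
  exact ha.ne this

lemma poissonD_mul_of_norm_eq_one (a : ℂ) {b : ℂ} (hb : ‖b‖ = 1) :
    poissonD (a * b) = (1 - ‖a‖ ^ 2) / ‖1 - a * b‖ ^ 2 := by
  rw [poissonD, norm_mul, hb, mul_one]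

section Szego

variable {α : ℕ → ℂ} {z : ℂ} {n : ℕ}

lemma rhoV_pos (hα : ‖α n‖ < 1) : 0 < rhoV α n :=
  Real.sqrt_pos.2 (by nlinarith [norm_nonneg (α n)])

lemma rhoV_sq (hα : ‖α n‖ ≤ 1) : rhoV α n ^ 2 = 1 - ‖α n‖ ^ 2 :=
  Real.sq_sqrt (by nlinarith [norm_nonneg (α n)])

lemma ofReal_rhoV_ne_zero (hα : ‖α n‖ < 1) : (rhoV α n : ℂ) ≠ 0 :=
  ofReal_ne_zero.mpr (rhoV_pos hα).ne'

lemma phiN_succ : phiN α (n + 1) z =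
    (rhoV α n : ℂ)⁻¹ * (z * phiN α n z - (starRingEnd ℂ) (α n) * phiNStar α n z) := rfl

lemma phiNStar_succ : phiNStar α (n + 1) z =
    (rhoV α n : ℂ)⁻¹ * (phiNStar α n z - α n * z * phiN α n z) := rfl

variable (hα : ∀ k, ‖α k‖ < 1) (hz : ‖z‖ = 1)
include hα hz

lemma norm_BV (n : ℕ) : ‖BV α n z‖ = 1 := by
  induction n with
  | zero => exact hz
  | succ n ih =>
    have hden := one_sub_mul_ne_zero_of_norm (hα n) ih
    rw [BV, norm_mul, norm_mul, hz, ih, norm_div, norm_one_sub_conj,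
      div_self (norm_ne_zero_iff.mpr hden), one_mul, one_mul]

lemma one_sub_mul_BV_ne_zero (n : ℕ) : 1 - α n * BV α n z ≠ 0 :=
  one_sub_mul_ne_zero_of_norm (hα n) (norm_BV hα hz n)

lemma mul_phiN_eq_BV_mul_phiNStar (n : ℕ) : z * phiN α n z = BV α n z * phiNStar α n z := by
  induction n with
  | zero => rfl
  | succ n ih =>
    have hBc : BV α n z * (starRingEnd ℂ) (BV α n z) = 1 := by
      rw [mul_conj, normSq_eq_norm_sq, norm_BV hα hz n]; norm_num
    have hden := one_sub_mul_BV_ne_zero hα hz n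
    have hstar :
        phiNStar α n z - α n * z * phiN α n z = phiNStar α n z * (1 - α n * BV α n z) := by
      linear_combination (-α n) * ih
    rw [phiN_succ, phiNStar_succ, hstar, BV]
    calc z * ((rhoV α n : ℂ)⁻¹ * (z * phiN α n z - (starRingEnd ℂ) (α n) * phiNStar α n z))
        = (rhoV α n : ℂ)⁻¹ * (z * phiNStar α n z * BV α n z *
            (1 - (starRingEnd ℂ) (α n * BV α n z))) := by
          rw [map_mul]
          linear_combination (z * (rhoV α n : ℂ)⁻¹) * ih +
            (z * (rhoV α n : ℂ)⁻¹ * phiNStar α n z * (starRingEnd ℂ) (α n)) * hBc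
      _ = _ := by
          rw [div_eq_mul_inv]
          linear_combination (-((rhoV α n : ℂ)⁻¹ * z * phiNStar α n z * BV α n z *
            (1 - (starRingEnd ℂ) (α n * BV α n z)))) * mul_inv_cancel₀ hden

lemma phiNStar_succ_eq (n : ℕ) : phiNStar α (n + 1) z =
    (rhoV α n : ℂ)⁻¹ * (phiNStar α n z * (1 - α n * BV α n z)) := by
  rw [phiNStar_succ]
  linear_combination (-(rhoV α n : ℂ)⁻¹ * α n) * mul_phiN_eq_BV_mul_phiNStar hα hz n

lemma phiNStar_ne_zero (n : ℕ) : phiNStar α n z ≠ 0 := by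
  induction n with
  | zero => exact one_ne_zero
  | succ n ih =>
    rw [phiNStar_succ_eq hα hz]
    exact mul_ne_zero (inv_ne_zero (ofReal_rhoV_ne_zero (hα n)))
      (mul_ne_zero ih (one_sub_mul_BV_ne_zero hα hz n))

lemma BV_eq_div (n : ℕ) : BV α n z = z * phiN α n z / phiNStar α n z :=
  eq_div_of_mul_eq (phiNStar_ne_zero hα hz n) (mul_phiN_eq_BV_mul_phiNStar hα hz n).symm

lemma norm_phiN_eq_norm_phiNStar (n : ℕ) : ‖phiN α n z‖ = ‖phiNStar α n z‖ := by
  simpa [hz, norm_BV hα hz n] using congrArg norm (mul_phiN_eq_BV_mul_phiNStar hα hz n)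

lemma norm_phiN_succ (n : ℕ) :
    ‖phiN α (n + 1) z‖ = (rhoV α n)⁻¹ * (‖phiN α n z‖ * ‖1 - α n * BV α n z‖) := by
  rw [norm_phiN_eq_norm_phiNStar hα hz, phiNStar_succ_eq hα hz, norm_mul, norm_mul, norm_inv,
    norm_real, Real.norm_of_nonneg (rhoV_pos (hα n)).le, norm_phiN_eq_norm_phiNStar hα hz]

lemma inv_norm_phiN_succ_sq (n : ℕ) :
    ‖phiN α (n + 1) z‖⁻¹ ^ 2 =
      ‖phiN α n z‖⁻¹ ^ 2 * ((1 - ‖α n‖ ^ 2) / ‖1 - α n * BV α n z‖ ^ 2) := by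
  rw [norm_phiN_succ hα hz, ← rhoV_sq (hα n).le]
  field_simp

lemma inv_norm_phiN_sq_eq_prod (n : ℕ) :
    ‖phiN α n z‖⁻¹ ^ 2 = ∏ k ∈ range n, poissonD (α k * BV α k z) := by
  induction n with
  | zero => simp [phiN, szego]
  | succ n ih =>
    rw [inv_norm_phiN_succ_sq hα hz, ih, prod_range_succ,
      poissonD_mul_of_norm_eq_one _ (norm_BV hα hz n)]

end Szego

/-- For any sequence `α` in the open unit disk and `θ ∈ ℝ`, for every `n`:
(a) `φ_n^*(e^{iθ}) ≠ 0`, `B_n(e^{iθ}) = e^{iθ} φ_n(e^{iθ})/φ_n^*(e^{iθ})` and `|B_n(e^{iθ})| = 1`;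
(b) `|φ_{n+1}(e^{iθ})|⁻² = |φ_n(e^{iθ})|⁻² (1 − |α_n|²)/|1 − α_n B_n(e^{iθ})|²`;
(c) `|φ_n(e^{iθ})|⁻² = ∏_{k<n} P_𝔻(α_k B_k(e^{iθ}), 1)`. -/
theorem prufer_poisson_identities (α : ℕ → ℂ) (hα : ∀ k, ‖α k‖ < 1)
    (θ : ℝ) (n : ℕ) :
    (phiNStar α n (Complex.exp (θ * Complex.I)) ≠ 0 ∧
      BV α n (Complex.exp (θ * Complex.I)) =
        Complex.exp (θ * Complex.I) * phiN α n (Complex.exp (θ * Complex.I)) /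
          phiNStar α n (Complex.exp (θ * Complex.I)) ∧
      ‖BV α n (Complex.exp (θ * Complex.I))‖ = 1) ∧
    (‖phiN α (n + 1) (Complex.exp (θ * Complex.I))‖)⁻¹ ^ 2 =
      (‖phiN α n (Complex.exp (θ * Complex.I))‖)⁻¹ ^ 2 *
        ((1 - ‖α n‖ ^ 2) /
          ‖1 - α n * BV α n (Complex.exp (θ * Complex.I))‖ ^ 2) ∧
    (‖phiN α n (Complex.exp (θ * Complex.I))‖)⁻¹ ^ 2 =
      ∏ k ∈ Finset.range n, poissonD (α k * BV α k (Complex.exp (θ * Complex.I))) := by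
  have hz : ‖Complex.exp (θ * Complex.I)‖ = 1 := norm_exp_ofReal_mul_I θ
  exact ⟨⟨phiNStar_ne_zero hα hz n, BV_eq_div hα hz n, norm_BV hα hz n⟩,
    inv_norm_phiN_succ_sq hα hz n, inv_norm_phiN_sq_eq_prod hα hz n⟩
end

section
/- Let Z be a random variable taking values in the open unit disk 𝔻 whose law Λ is invariant under every rotation z ↦ e^{it} z, and fix w with |w| = 1. Then the random variable Z(1 + conj(Z) w)/(1 + Z conj(w)) has law P_𝔻(z, w) dΛ(z) on 𝔻, where P_𝔻(z, w) = (1−|z|²)/|w−z|² is the Poisson kernel of the disk. -/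
/-!
Averaging over rotations reduces the claim to circles `|ζ| = |z|`. For `c = conj z * w` and
`|e| = 1` one has `diskTransform w (e z) = z · M_c(e)` with
`M_c(ζ) = (ζ + c) / (1 + conj c · ζ)`, and `P_𝔻(e z, w) = P_𝔻(c, e)`; so it suffices that the
circle automorphism `M_c` pushes the uniform measure to the harmonic measure `P_𝔻(c, ·)`. This is
a change of variables along a lift `ψ : ℝ → ℝ` of `M_c`, whose derivative
`ψ'(s) = (1 - |c|²) / |1 + conj c · e^{is}|²` is exactly the reciprocal of `P_𝔻(c, M_c(e^{is}))`.
-/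

open MeasureTheory Complex ComplexConjugate Set
open scoped Real ENNReal

noncomputable section

lemma one_sub_sq_norm_pos {c : ℂ} (hc : ‖c‖ < 1) : 0 < 1 - ‖c‖ ^ 2 :=
  sub_pos.mpr (pow_lt_one₀ (norm_nonneg c) hc two_ne_zero)

lemma re_one_add_pos {u : ℂ} (hu : ‖u‖ < 1) : 0 < (1 + u).re := by
  rw [add_re, one_re]
  linarith [neg_abs_le u.re, abs_re_le_norm u]

lemma re_one_sub_div_one_add (u : ℂ) :
    ((1 - u) / (1 + u)).re = (1 - ‖u‖ ^ 2) / ‖1 + u‖ ^ 2 := by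
  rw [div_re, ← add_div, Complex.sq_norm, Complex.sq_norm]
  congr 1
  simp only [normSq_apply, sub_re, sub_im, add_re, add_im, one_re, one_im]
  ring

lemma mul_conj_of_norm_eq_one {ζ : ℂ} (hζ : ‖ζ‖ = 1) : ζ * conj ζ = 1 := by
  rw [mul_conj', hζ, ofReal_one, one_pow]

lemma conj_exp_ofReal_mul_I (s : ℝ) : conj (exp (s * I)) = exp (-(s * I)) := by
  rw [← exp_conj, map_mul, conj_ofReal, conj_I, mul_neg]

lemma norm_mul_exp_neg_ofReal_mul_I (c : ℂ) (s : ℝ) : ‖c * exp (-(s * I))‖ = ‖c‖ := by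
  rw [norm_mul, ← conj_exp_ofReal_mul_I, norm_conj, norm_exp_ofReal_mul_I, mul_one]

lemma conj_one_add_mul_exp_neg_ofReal_mul_I (c : ℂ) (s : ℝ) :
    conj (1 + c * exp (-(s * I))) = 1 + conj c * exp (s * I) := by
  rw [map_add, map_one, map_mul, ← conj_exp_ofReal_mul_I, conj_conj]

lemma exp_ofReal_add_two_pi_mul_I (s : ℝ) : exp (((s + 2 * π : ℝ) : ℂ) * I) = exp (s * I) := by
  push_cast
  exact exp_mul_I_periodic s

lemma poissonKernel_zero_of_norm_eq_one {ζ : ℂ} (hζ : ‖ζ‖ = 1) (c : ℂ) :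
    poissonKernel 0 c ζ = (1 - ‖c‖ ^ 2) / ‖ζ - c‖ ^ 2 := by
  simp [poissonKernel_def, hζ]

lemma Function.Periodic.setLIntegral_Ioc_add_eq {F : ℝ → ℝ≥0∞} {T : ℝ} (hT : 0 < T)
    (hF : F.Periodic T) (a b : ℝ) :
    ∫⁻ t in Ioc a (a + T), F t = ∫⁻ t in Ioc b (b + T), F t := by
  have : Fact (0 < T) := ⟨hT⟩
  have h := AddCircle.lintegral_preimage T a hF.lift
  rw [← AddCircle.lintegral_preimage T b hF.lift] at h
  simpa only [Function.Periodic.lift_coe] using h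

/-- `2 * arg (1 + c e^{-is})` is the angle from `e^{is}` to its image under
`ζ ↦ (ζ + c) / (1 + conj c * ζ)`; for `‖c‖ < 1` it stays on the principal branch because
`Re (1 + c e^{-is}) > 0`. -/
def mobiusAngle (c : ℂ) (s : ℝ) : ℝ :=
  s + 2 * (log (1 + c * exp (-(s * I)))).im

section mobiusAngle

variable {c : ℂ}

lemma one_add_mul_exp_mem_slitPlane (hc : ‖c‖ < 1) (s : ℝ) :
    1 + c * exp (-(s * I)) ∈ slitPlane :=
  mem_slitPlane_iff.mpr <| .inl <| re_one_add_pos <|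
    (norm_mul_exp_neg_ofReal_mul_I c s).trans_lt hc

lemma one_add_conj_mul_exp_ne_zero (hc : ‖c‖ < 1) (s : ℝ) : 1 + conj c * exp (s * I) ≠ 0 := by
  rw [← conj_one_add_mul_exp_neg_ofReal_mul_I, map_ne_zero]
  exact slitPlane_ne_zero (one_add_mul_exp_mem_slitPlane hc s)

lemma exp_mobiusAngle (hc : ‖c‖ < 1) (s : ℝ) :
    exp (mobiusAngle c s * I) = (exp (s * I) + c) / (1 + conj c * exp (s * I)) := by
  set m := 1 + c * exp (-(s * I)) with hm
  have hm0 : m ≠ 0 := slitPlane_ne_zero (one_add_mul_exp_mem_slitPlane hc s)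
  have harg : (mobiusAngle c s : ℂ) * I = s * I + (log m - conj (log m)) := by
    rw [sub_conj, mobiusAngle]
    push_cast
    ring
  rw [harg, exp_add, exp_sub, exp_conj, exp_log hm0, hm, conj_one_add_mul_exp_neg_ofReal_mul_I,
    mul_div_assoc', mul_add, mul_one, mul_left_comm, ← exp_add, add_neg_cancel, exp_zero, mul_one]

lemma hasDerivAt_mobiusAngle (hc : ‖c‖ < 1) (s : ℝ) :
    HasDerivAt (mobiusAngle c) ((1 - ‖c‖ ^ 2) / ‖1 + conj c * exp (s * I)‖ ^ 2) s := by
  set u := c * exp (-(s * I)) with hu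
  have hmem := one_add_mul_exp_mem_slitPlane hc s
  have hlog : HasDerivAt (fun t : ℝ => log (1 + c * exp (-(t * I)))) (-I * u / (1 + u)) s := by
    have h : HasDerivAt (fun z : ℂ => 1 + c * exp (-(z * I))) (-I * u) s :=
      ((((hasDerivAt_mul_const I).neg.cexp.const_mul c).const_add 1).congr_deriv
        (by simp only [Pi.neg_apply, hu]; ring))
    exact (h.clog hmem).comp_ofReal
  have hderiv : HasDerivAt (mobiusAngle c) (1 + 2 * (-I * u / (1 + u)).im) s :=
    (hasDerivAt_id s).add ((imCLM.hasFDerivAt.comp_hasDerivAt s hlog).const_mul 2)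
  have hu1 : 1 + u ≠ 0 := slitPlane_ne_zero hmem
  have hre : 1 + 2 * (-I * u / (1 + u)).im = ((1 - u) / (1 + u)).re := by
    rw [show (1 - u) / (1 + u) = 1 - (u / (1 + u) + u / (1 + u)) by field_simp; ring,
      mul_div_assoc]
    simp only [neg_mul, neg_im, I_mul_im, sub_re, add_re, one_re]
    ring
  rw [hre, re_one_sub_div_one_add, hu, norm_mul_exp_neg_ofReal_mul_I] at hderiv
  rwa [← conj_one_add_mul_exp_neg_ofReal_mul_I, norm_conj]

lemma mobiusAngle_deriv_pos (hc : ‖c‖ < 1) (s : ℝ) :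
    0 < (1 - ‖c‖ ^ 2) / ‖1 + conj c * exp (s * I)‖ ^ 2 := by
  have := one_sub_sq_norm_pos hc
  have := norm_pos_iff.mpr (one_add_conj_mul_exp_ne_zero hc s)
  positivity

lemma strictMono_mobiusAngle (hc : ‖c‖ < 1) : StrictMono (mobiusAngle c) :=
  strictMono_of_hasDerivAt_pos (hasDerivAt_mobiusAngle hc) (mobiusAngle_deriv_pos hc)

lemma mobiusAngle_add_two_pi (c : ℂ) (s : ℝ) :
    mobiusAngle c (s + 2 * π) = mobiusAngle c s + 2 * π := by
  have h : exp (-(((s + 2 * π : ℝ) : ℂ) * I)) = exp (-(s * I)) := by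
    rw [← conj_exp_ofReal_mul_I, exp_ofReal_add_two_pi_mul_I, conj_exp_ofReal_mul_I]
  rw [mobiusAngle, mobiusAngle, h]
  ring

lemma mobiusAngle_image_Ioc (hc : ‖c‖ < 1) :
    mobiusAngle c '' Ioc 0 (2 * π) = Ioc (mobiusAngle c 0) (mobiusAngle c 0 + 2 * π) := by
  have hmono := strictMono_mobiusAngle hc
  have hcont : Continuous (mobiusAngle c) :=
    continuous_iff_continuousAt.mpr fun s => (hasDerivAt_mobiusAngle hc s).continuousAt
  have hper : mobiusAngle c (2 * π) = mobiusAngle c 0 + 2 * π := by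
    simpa using mobiusAngle_add_two_pi c 0
  rw [← hper]
  refine Subset.antisymm ?_ fun y hy => intermediate_value_Ioc (by positivity) hcont.continuousOn hy
  rintro _ ⟨x, hx, rfl⟩
  exact ⟨hmono hx.1, hmono.monotone hx.2⟩

lemma norm_exp_mobiusAngle_sub_mul (hc : ‖c‖ < 1) (s : ℝ) :
    ‖exp (mobiusAngle c s * I) - c‖ * ‖1 + conj c * exp (s * I)‖ = 1 - ‖c‖ ^ 2 := by
  have hne := one_add_conj_mul_exp_ne_zero hc s
  have h : (exp (mobiusAngle c s * I) - c) * (1 + conj c * exp (s * I)) =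
      exp (s * I) * ((1 - ‖c‖ ^ 2 : ℝ) : ℂ) := by
    rw [exp_mobiusAngle hc, div_sub' hne, div_mul_cancel₀ _ hne]
    push_cast
    rw [← mul_conj']
    ring
  rw [← norm_mul, h, norm_mul, norm_exp_ofReal_mul_I, one_mul, norm_real,
    Real.norm_of_nonneg (one_sub_sq_norm_pos hc).le]

end mobiusAngle

theorem lintegral_comp_mobius_circle {c : ℂ} (hc : ‖c‖ < 1) (g : ℂ → ℝ≥0∞) :
    ∫⁻ s in Ioc 0 (2 * π), g ((exp (s * I) + c) / (1 + conj c * exp (s * I))) =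
      ∫⁻ s in Ioc 0 (2 * π),
        ENNReal.ofReal (poissonKernel 0 c (exp (s * I))) * g (exp (s * I)) := by
  set F : ℝ → ℝ≥0∞ := fun t =>
    ENNReal.ofReal (poissonKernel 0 c (exp (t * I))) * g (exp (t * I)) with hF
  have hFper : F.Periodic (2 * π) := fun t => by simp only [hF, exp_ofReal_add_two_pi_mul_I]
  have hjac : ∀ s : ℝ, ENNReal.ofReal |(1 - ‖c‖ ^ 2) / ‖1 + conj c * exp (s * I)‖ ^ 2| *
      F (mobiusAngle c s) = g ((exp (s * I) + c) / (1 + conj c * exp (s * I))) := by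
    intro s
    have hD := mobiusAngle_deriv_pos hc s
    have hprod : (1 - ‖c‖ ^ 2) / ‖1 + conj c * exp (s * I)‖ ^ 2 *
        ((1 - ‖c‖ ^ 2) / ‖exp (mobiusAngle c s * I) - c‖ ^ 2) = 1 := by
      rw [div_mul_div_comm, ← mul_pow, mul_comm ‖_‖, norm_exp_mobiusAngle_sub_mul hc, ← sq]
      exact div_self (pow_pos (one_sub_sq_norm_pos hc) 2).ne'
    simp only [hF, poissonKernel_zero_of_norm_eq_one (norm_exp_ofReal_mul_I _)]
    rw [abs_of_pos hD, ← mul_assoc, ← ENNReal.ofReal_mul hD.le, hprod, ENNReal.ofReal_one,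
      one_mul, exp_mobiusAngle hc]
  calc ∫⁻ s in Ioc 0 (2 * π), g ((exp (s * I) + c) / (1 + conj c * exp (s * I)))
      = ∫⁻ s in Ioc 0 (2 * π), ENNReal.ofReal |(1 - ‖c‖ ^ 2) / ‖1 + conj c * exp (s * I)‖ ^ 2| *
          F (mobiusAngle c s) := by simp only [hjac]
    _ = ∫⁻ t in mobiusAngle c '' Ioc 0 (2 * π), F t :=
      (lintegral_image_eq_lintegral_abs_deriv_mul measurableSet_Ioc
        (fun s _ => (hasDerivAt_mobiusAngle hc s).hasDerivWithinAt)
        (strictMono_mobiusAngle hc).injective.injOn F).symm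
    _ = ∫⁻ t in Ioc 0 (0 + 2 * π), F t := by
      rw [mobiusAngle_image_Ioc hc, hFper.setLIntegral_Ioc_add_eq Real.two_pi_pos]
    _ = _ := by rw [zero_add]

def diskTransform (w z : ℂ) : ℂ := z * (1 + conj z * w) / (1 + z * conj w)

lemma diskTransform_exp_mul (w z : ℂ) (s : ℝ) :
    diskTransform w (exp (s * I) * z) =
      z * ((exp (s * I) + conj z * w) / (1 + conj (conj z * w) * exp (s * I))) := by
  rw [diskTransform, mul_div_assoc', map_mul, map_mul, conj_conj]
  congr 1
  · linear_combination (z * conj z * w) * mul_conj_of_norm_eq_one (norm_exp_ofReal_mul_I s)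
  · ring

lemma poissonKernel_exp_mul {w : ℂ} (hw : ‖w‖ = 1) (z : ℂ) (s : ℝ) :
    poissonKernel 0 (exp (s * I) * z) w = poissonKernel 0 (conj z * w) (exp (s * I)) := by
  have h : w - exp (s * I) * z = w * exp (s * I) * conj (exp (s * I) - conj z * w) := by
    rw [map_sub, map_mul, conj_conj]
    linear_combination (-w) * mul_conj_of_norm_eq_one (norm_exp_ofReal_mul_I s) +
      exp (s * I) * z * mul_conj_of_norm_eq_one hw
  rw [poissonKernel_zero_of_norm_eq_one hw,
    poissonKernel_zero_of_norm_eq_one (norm_exp_ofReal_mul_I s), h]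
  simp only [norm_mul, norm_conj, hw, norm_exp_ofReal_mul_I, one_mul, mul_one]

lemma lintegral_diskTransform_circle {z w : ℂ} (hz : ‖z‖ < 1) (hw : ‖w‖ = 1)
    (g : ℂ → ℝ≥0∞) :
    ∫⁻ s in Ioc 0 (2 * π), g (diskTransform w (exp (s * I) * z)) =
      ∫⁻ s in Ioc 0 (2 * π),
        ENNReal.ofReal (poissonKernel 0 (exp (s * I) * z) w) * g (exp (s * I) * z) := by
  have hc : ‖conj z * w‖ < 1 := by rwa [norm_mul, norm_conj, hw, mul_one]
  simp_rw [diskTransform_exp_mul, poissonKernel_exp_mul hw, mul_comm (exp _) z]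
  exact lintegral_comp_mobius_circle hc fun ζ => g (z * ζ)

section RotationInvariant

variable {Λ : Measure ℂ} [SFinite Λ] (hrot : ∀ t : ℝ, Λ.map (fun z => exp (t * I) * z) = Λ)
include hrot

lemma lintegral_circle_lintegral_of_map_rotation_eq {G : ℂ → ℝ≥0∞} (hG : Measurable G) :
    ∫⁻ z, (∫⁻ s in Ioc 0 (2 * π), G (exp (s * I) * z)) ∂Λ =
      ENNReal.ofReal (2 * π) * ∫⁻ z, G z ∂Λ := by
  have hrot' : ∀ s : ℝ, ∫⁻ z, G (exp (s * I) * z) ∂Λ = ∫⁻ z, G z ∂Λ := fun s => by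
    conv_rhs => rw [← hrot s]
    rw [lintegral_map hG (measurable_const_mul _)]
  rw [lintegral_lintegral_swap (by fun_prop), lintegral_congr fun s => hrot' s,
    setLIntegral_const, Real.volume_Ioc, sub_zero, mul_comm]

lemma lintegral_eq_of_circle_lintegral_eq {G H : ℂ → ℝ≥0∞} (hG : Measurable G)
    (hH : Measurable H)
    (hGH : ∀ᵐ z ∂Λ, ∫⁻ s in Ioc 0 (2 * π), G (exp (s * I) * z) =
      ∫⁻ s in Ioc 0 (2 * π), H (exp (s * I) * z)) :
    ∫⁻ z, G z ∂Λ = ∫⁻ z, H z ∂Λ := by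
  rw [← ENNReal.mul_right_inj (ENNReal.ofReal_pos.mpr Real.two_pi_pos).ne' ENNReal.ofReal_ne_top,
    ← lintegral_circle_lintegral_of_map_rotation_eq hrot hG,
    ← lintegral_circle_lintegral_of_map_rotation_eq hrot hH]
  exact lintegral_congr_ae hGH

end RotationInvariant

end

/-- If `Z` has a rotationally invariant law `Λ` on the open unit disk and
`|w| = 1`, then `Z(1 + conj(Z) w)/(1 + Z conj(w))` has law `P_𝔻(z, w) Λ(dz)`, where
`P_𝔻(z, w) = (1 − |z|²)/|w − z|²` is the Poisson kernel of the disk. -/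
theorem rotation_transform
    (Λ : Measure ℂ) [IsProbabilityMeasure Λ]
    (hdisk : ∀ᵐ z ∂Λ, ‖z‖ < 1)
    (hrot : ∀ t : ℝ, Λ.map (fun z => Complex.exp (t * Complex.I) * z) = Λ)
    (w : ℂ) (hw : ‖w‖ = 1) :
    Λ.map (fun z => z * (1 + (starRingEnd ℂ) z * w) / (1 + z * (starRingEnd ℂ) w)) =
      Λ.withDensity
        (fun z => ENNReal.ofReal ((1 - ‖z‖ ^ 2) / ‖w - z‖ ^ 2)) := by
  have hdensity : (fun z => ENNReal.ofReal ((1 - ‖z‖ ^ 2) / ‖w - z‖ ^ 2)) =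
      fun z => ENNReal.ofReal (poissonKernel 0 z w) := by
    simp only [poissonKernel_zero_of_norm_eq_one hw]
  have hT : Measurable (diskTransform w) := by unfold diskTransform; fun_prop
  have hP : Measurable fun z => ENNReal.ofReal (poissonKernel 0 z w) := by
    simp only [poissonKernel_def]; fun_prop
  change Λ.map (diskTransform w) = _
  rw [hdensity]
  refine Measure.ext_of_lintegral _ fun g hg => ?_
  rw [lintegral_map hg hT, lintegral_withDensity_eq_lintegral_mul _ hP hg]
  refine lintegral_eq_of_circle_lintegral_eq hrot (hg.comp hT) (hP.mul hg) ?_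
  filter_upwards [hdisk] with z hz
  exact lintegral_diskTransform_circle hz hw g
end
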